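/- The infinite product ∏_{n=2}^∞ (1 − 1/n²)^n · e^{1/n} converges and its value is e^γ / 2, where γ is the Euler–Mascheroni constant. -/

import Mathlib

/-!
Since `1 - x ≤ e^{-x}`, every factor `(1 - 1/n²)ⁿ e^{1/n}` lies in `(0, 1]`, so the logarithms of
the factors have constant sign and the product converges as soon as its partial products tend to a
positive limit. The factors `(1 - 1/n²)ⁿ = ((n - 1)(n + 1)/n²)ⁿ` telescope, and the partial product
up to `n = N + 1` equals `(1 + 1/M)^M · e^{H_M - log M} / (2e)` with `M = N + 1`, which tends to
`e · e^γ / (2e) = e^γ / 2`.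
-/

open Real Filter Finset Topology

namespace Real

lemma hasProd_of_tendsto_prod_range_of_le_one {f : ℕ → ℝ} {a : ℝ} (hpos : ∀ n, 0 < f n)
    (hle : ∀ n, f n ≤ 1) (ha : 0 < a)
    (h : Tendsto (fun N ↦ ∏ k ∈ range N, f k) atTop (𝓝 a)) : HasProd f a := by
  have hlog : Tendsto (fun N ↦ ∑ k ∈ range N, -log (f k)) atTop (𝓝 (-log a)) := by
    refine ((continuousAt_log ha.ne').tendsto.comp h).neg.congr fun N ↦ ?_
    simp [log_prod fun k _ ↦ (hpos k).ne']
  have hsum : HasSum (fun n ↦ -log (f n)) (-log a) :=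
    (hasSum_iff_tendsto_nat_of_nonneg (fun n ↦ neg_nonneg.2 (log_nonpos (hpos n).le (hle n))) _).2
      hlog
  rw [← exp_log ha]
  exact hasProd_of_hasSum_log hpos (by simpa using hsum.neg)

end Real

lemma one_sub_inv_sq_pow_mul_exp_inv_le_one (m : ℕ) :
    (1 - 1 / (m : ℝ) ^ 2) ^ m * exp (1 / m) ≤ 1 := by
  rcases m.eq_zero_or_pos with rfl | hm
  · simp
  have hx : 0 ≤ 1 - 1 / (m : ℝ) ^ 2 := by
    rw [sub_nonneg, div_le_one (by positivity)]
    exact one_le_pow₀ (by exact_mod_cast hm)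
  calc (1 - 1 / (m : ℝ) ^ 2) ^ m * exp (1 / m)
      ≤ exp (-(1 / (m : ℝ) ^ 2)) ^ m * exp (1 / m) := by
        gcongr
        linarith [add_one_le_exp (-(1 / (m : ℝ) ^ 2))]
    _ = 1 := by
        rw [← exp_nat_mul, ← exp_add]
        field_simp
        simp

lemma one_sub_inv_sq_pos {m : ℝ} (hm : 1 < m) : 0 < 1 - 1 / m ^ 2 := by
  rw [sub_pos, div_lt_one (by positivity)]
  exact one_lt_pow₀ hm two_ne_zero

lemma prod_range_one_sub_inv_sq_pow (N : ℕ) :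
    ∏ k ∈ range N, (1 - 1 / ((k : ℝ) + 2) ^ 2) ^ (k + 2)
      = ((N : ℝ) + 2) ^ (N + 1) / (2 * ((N : ℝ) + 1) ^ (N + 2)) := by
  induction N with
  | zero => norm_num
  | succ n ih =>
    have factor :
        1 - 1 / ((n : ℝ) + 2) ^ 2 = ((n : ℝ) + 1) * ((n : ℝ) + 3) / ((n : ℝ) + 2) ^ 2 := by
      field_simp
      ring
    rw [prod_range_succ, ih, factor, div_pow, mul_pow, ← pow_mul]
    push_cast
    field_simp
    ring

lemma prod_range_one_sub_inv_sq_pow_mul_exp (N : ℕ) :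
    ∏ k ∈ range N, (1 - 1 / ((k : ℝ) + 2) ^ 2) ^ (k + 2) * exp (1 / ((k : ℝ) + 2))
      = (1 + 1 / ((N + 1 : ℕ) : ℝ)) ^ (N + 1)
          * exp ((∑ k ∈ range (N + 1), (1 : ℝ) / (k + 1)) - log ((N + 1 : ℕ) : ℝ))
          / (2 * exp 1) := by
  have harmonic_shift : ∑ k ∈ range (N + 1), (1 : ℝ) / (k + 1)
      = (∑ k ∈ range N, 1 / ((k : ℝ) + 2)) + 1 := by
    rw [sum_range_succ']
    push_cast
    norm_num [add_assoc]
  rw [prod_mul_distrib, prod_range_one_sub_inv_sq_pow, ← exp_sum, harmonic_shift,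
    show ∀ s l : ℝ, s + 1 - l = s - l + 1 by intros; ring, exp_add, exp_sub,
    exp_log (by positivity)]
  have hN : (1 : ℝ) + 1 / ((N : ℝ) + 1) = ((N : ℝ) + 2) / ((N : ℝ) + 1) := by
    field_simp
    ring
  push_cast
  rw [hN, div_pow]
  field_simp
  ring

/-- the infinite product `∏_{n≥2} (1 − 1/n²)ⁿ · e^{1/n}` converges, and its
value is `e^γ / 2`, where `γ = lim_{N→∞} (∑_{k=1}^N 1/k − log N)` is the Euler–Mascheroni
constant. -/
theorem stmt8 (γ : ℝ)
    (hγ : Filter.Tendsto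
      (fun N : ℕ => (∑ k ∈ Finset.range N, (1 : ℝ) / (k + 1)) - Real.log N)
      Filter.atTop (nhds γ)) :
    Multipliable (fun n : ℕ =>
      (1 - 1 / ((n : ℝ) + 2) ^ 2) ^ (n + 2) * Real.exp (1 / ((n : ℝ) + 2))) ∧
    ∏' n : ℕ, (1 - 1 / ((n : ℝ) + 2) ^ 2) ^ (n + 2) * Real.exp (1 / ((n : ℝ) + 2))
      = Real.exp γ / 2 := by
  have hpos (n : ℕ) :
      0 < (1 - 1 / ((n : ℝ) + 2) ^ 2) ^ (n + 2) * exp (1 / ((n : ℝ) + 2)) := by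
    have := one_sub_inv_sq_pos (m := (n : ℝ) + 2) (by linarith [n.cast_nonneg (α := ℝ)])
    positivity
  have hle (n : ℕ) :
      (1 - 1 / ((n : ℝ) + 2) ^ 2) ^ (n + 2) * exp (1 / ((n : ℝ) + 2)) ≤ 1 := by
    simpa using one_sub_inv_sq_pow_mul_exp_inv_le_one (n + 2)
  have hlim : Tendsto (fun M : ℕ ↦ (1 + 1 / (M : ℝ)) ^ M
      * exp ((∑ k ∈ range M, (1 : ℝ) / (k + 1)) - log M) / (2 * exp 1)) atTop
      (𝓝 (exp γ / 2)) := by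
    have := ((tendsto_one_add_div_pow_exp 1).mul
      ((continuous_exp.tendsto γ).comp hγ)).div_const (2 * exp 1)
    rwa [show exp 1 * exp γ / (2 * exp 1) = exp γ / 2 by field_simp] at this
  have hprod := Real.hasProd_of_tendsto_prod_range_of_le_one hpos hle (by positivity)
    ((hlim.comp (tendsto_add_atTop_nat 1)).congr fun N ↦
      (prod_range_one_sub_inv_sq_pow_mul_exp N).symm)
  exact ⟨hprod.multipliable, hprod.tprod_eq⟩
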